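/- Let h₁ⁱ, h₂ⁱ and hʲ for j in a finite index set N of size D ≥ 1 be unit vectors in a real inner product space. Then -log(exp(⟪h₁ⁱ, h₂ⁱ⟫) / (exp(⟪h₁ⁱ, h₂ⁱ⟫) + ∑_{j∈N} exp(⟪h₁ⁱ, hʲ⟫))) ≥ log(1 + D · exp((1/2)‖h₁ⁱ - h₂ⁱ‖² - (1/(2D)) ∑_{j∈N} ‖h₁ⁱ - hʲ‖²)). -/

import Mathlib

open RealInnerProductSpace

theorem icl_single_anchor_lower_bound
    {E : Type*} [NormedAddCommGroup E] [InnerProductSpace ℝ E]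
    {ι : Type*} (N : Finset ι) (D : ℕ) (hD : 1 ≤ D) (hcard : N.card = D)
    (h₁ h₂ : E) (h : ι → E)
    (hh₁ : ‖h₁‖ = 1) (hh₂ : ‖h₂‖ = 1) (hh : ∀ j ∈ N, ‖h j‖ = 1) :
    -Real.log (Real.exp ⟪h₁, h₂⟫ /
        (Real.exp ⟪h₁, h₂⟫ + ∑ j ∈ N, Real.exp ⟪h₁, h j⟫))
      ≥ Real.log (1 + D * Real.exp ((1 / 2) * ‖h₁ - h₂‖ ^ 2
          - (1 / (2 * (D : ℝ))) * ∑ j ∈ N, ‖h₁ - h j‖ ^ 2)) := by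
  have hDpos : (0 : ℝ) < D := by exact_mod_cast hD
  set a : ℝ := ⟪h₁, h₂⟫ with ha
  set b : ι → ℝ := fun j => ⟪h₁, h j⟫ with hb
  set S : ℝ := ∑ j ∈ N, Real.exp (b j) with hS
  have hSpos : 0 < S := by
    apply Finset.sum_pos (fun j _ => Real.exp_pos _)
    rw [← Finset.card_pos, hcard]; exact hD
  -- inner product via norms
  have key : ∀ u v : E, ‖u‖ = 1 → ‖v‖ = 1 → ⟪u, v⟫ = 1 - ‖u - v‖ ^ 2 / 2 := by
    intro u v hu hv
    have := norm_sub_sq_real u v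
    rw [hu, hv] at this
    linarith
  -- rewrite LHS
  have hLHS : -Real.log (Real.exp a / (Real.exp a + S))
      = Real.log (1 + S * Real.exp (-a)) := by
    rw [← Real.log_inv]
    congr 1
    rw [inv_div]
    field_simp [Real.exp_ne_zero]
    rw [Real.exp_neg]
    field_simp
  rw [hLHS]
  apply Real.log_le_log (by positivity)
  have hE : (1 / 2) * ‖h₁ - h₂‖ ^ 2 - (1 / (2 * (D : ℝ))) * ∑ j ∈ N, ‖h₁ - h j‖ ^ 2
      = ((1 / (D : ℝ)) * ∑ j ∈ N, b j) + (-a) := by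
    rw [ha, key h₁ h₂ hh₁ hh₂]
    have hsum : ∑ j ∈ N, b j = ∑ j ∈ N, (1 - ‖h₁ - h j‖ ^ 2 / 2) := by
      apply Finset.sum_congr rfl
      intro j hj
      exact key h₁ (h j) hh₁ (hh j hj)
    rw [hsum, Finset.sum_sub_distrib, Finset.sum_const, hcard,
      ← Finset.sum_div]
    field_simp
    ring
  rw [hE, Real.exp_add]
  have hJensen : Real.exp ((1 / (D : ℝ)) * ∑ j ∈ N, b j) ≤ (1 / (D : ℝ)) * S := by
    have := convexOn_exp.map_sum_le (t := N) (w := fun _ => (1 : ℝ) / D)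
      (p := b) (fun _ _ => by positivity)
      (by rw [Finset.sum_const, hcard, nsmul_eq_mul]; field_simp)
      (fun _ _ => Set.mem_univ _)
    simpa [smul_eq_mul, Finset.mul_sum, hS] using this
  have : (D : ℝ) * (Real.exp ((1 / (D : ℝ)) * ∑ j ∈ N, b j) * Real.exp (-a))
      ≤ S * Real.exp (-a) := by
    have h1 : (D : ℝ) * Real.exp ((1 / (D : ℝ)) * ∑ j ∈ N, b j) ≤ S :=
      calc (D : ℝ) * Real.exp ((1 / (D : ℝ)) * ∑ j ∈ N, b j)
          ≤ (D : ℝ) * ((1 / (D : ℝ)) * S) :=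
            mul_le_mul_of_nonneg_left hJensen hDpos.le
        _ = S := by field_simp
    nlinarith [Real.exp_pos (-a)]
  linarith
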